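/- Let T > 0 and let σ : [0,T] → ℝ be Lipschitz continuous with σ(u) ≥ σ̲ > 0 for all u. Then there exists a constant C > 0 such that for every integer B ≥ 1 and every 1 ≤ i ≤ B, with Δ_B = T/B, 𝖳_i = i·T/B, ρ_i = ρ_{𝖳_{i−1},𝖳_i} and κ_i = κ_{𝖳_{i−1},𝖳_i}, one has 1 − C·Δ_B ≤ ρ_i ≤ 1 and 1 − C·Δ_B ≤ κ_i ≤ 1. -/

import Mathlib

open MeasureTheory
open scoped ENNReal NNReal

/-- Heteroskedasticity measure `ρ_{r,s}`. -/
noncomputable def rhoM (σ : ℝ → ℝ) (r s : ℝ) : ℝ :=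
  (∫ u in r..s, σ u ^ 2) /
    ((s - r) ^ ((1 : ℝ) / 2) * (∫ u in r..s, σ u ^ 4) ^ ((1 : ℝ) / 2))

/-- Heteroskedasticity measure `κ_{r,s}`. -/
noncomputable def kappaM (σ : ℝ → ℝ) (r s : ℝ) : ℝ :=
  (∫ u in r..s, σ u ^ 3) /
    ((s - r) ^ ((1 : ℝ) / 4) * (∫ u in r..s, σ u ^ 4) ^ ((3 : ℝ) / 4))

lemma block_bounds (σ : ℝ → ℝ) (r s a b : ℝ) (hrs : r < s)
    (hcont : ContinuousOn σ (Set.Icc r s)) (ha : 0 < a)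
    (hab : ∀ u ∈ Set.Icc r s, a ≤ σ u ∧ σ u ≤ b) :
    (a ^ 2 / b ^ 2 ≤ rhoM σ r s ∧ rhoM σ r s ≤ 1) ∧
      (a ^ 3 / b ^ 3 ≤ kappaM σ r s ∧ kappaM σ r s ≤ 1) := by
  have hΔ : 0 < s - r := sub_pos.2 hrs
  have haleb : a ≤ b := by
    have := hab r ⟨le_refl r, hrs.le⟩; linarith [this.1, this.2]
  have hb : 0 < b := ha.trans_le haleb
  -- integrability
  have hint : ∀ n : ℕ, IntervalIntegrable (fun u => σ u ^ n) volume r s := by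
    intro n
    exact ContinuousOn.intervalIntegrable (by rw [Set.uIcc_of_le hrs.le]; exact hcont.pow n)
  -- bounds on integrals
  have hlb : ∀ n : ℕ, (s - r) * a ^ n ≤ ∫ u in r..s, σ u ^ n := by
    intro n
    have := intervalIntegral.integral_mono_on hrs.le
      (intervalIntegrable_const (c := a ^ n)) (hint n)
      (fun x hx => pow_le_pow_left₀ ha.le (hab x hx).1 n)
    simpa using this
  have hub : ∀ n : ℕ, (∫ u in r..s, σ u ^ n) ≤ (s - r) * b ^ n := by
    intro n
    have := intervalIntegral.integral_mono_on hrs.le (hint n)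
      (intervalIntegrable_const (c := b ^ n))
      (fun x hx => pow_le_pow_left₀ (ha.le.trans (hab x hx).1) (hab x hx).2 n)
    simpa using this
  have hI4pos : 0 < ∫ u in r..s, σ u ^ 4 := lt_of_lt_of_le (by positivity) (hlb 4)
  have hI2pos : 0 < ∫ u in r..s, σ u ^ 2 := lt_of_lt_of_le (by positivity) (hlb 2)
  have hI3pos : 0 < ∫ u in r..s, σ u ^ 3 := lt_of_lt_of_le (by positivity) (hlb 3)
  have hdenρ : 0 < (s - r) ^ ((1 : ℝ) / 2) * (∫ u in r..s, σ u ^ 4) ^ ((1 : ℝ) / 2) := by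
    positivity
  have hdenκ : 0 < (s - r) ^ ((1 : ℝ) / 4) * (∫ u in r..s, σ u ^ 4) ^ ((3 : ℝ) / 4) := by
    positivity
  -- measure-theoretic setup for Hölder
  have hmeasσ : ∀ n : ℕ,
      AEStronglyMeasurable (fun u => σ u ^ n) (volume.restrict (Set.Ioc r s)) := by
    intro n
    exact ContinuousOn.aestronglyMeasurable
      ((hcont.mono Set.Ioc_subset_Icc_self).pow n) measurableSet_Ioc
  have hvol : ∫ u in Set.Ioc r s, (1 : ℝ) = s - r := by
    simp [Real.volume_Ioc, ENNReal.toReal_ofReal hΔ.le, hrs.le]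
  have hboundℒp : ∀ n : ℕ, ∀ p : ℝ≥0∞,
      MemLp (fun u => σ u ^ n) p (volume.restrict (Set.Ioc r s)) := by
    intro n p
    refine MemLp.of_bound (hmeasσ n) (b ^ n) ?_
    refine (ae_restrict_iff' measurableSet_Ioc).2 (ae_of_all _ fun x hx => ?_)
    have hx' := hab x (Set.Ioc_subset_Icc_self hx)
    rw [Real.norm_eq_abs, abs_of_nonneg (pow_nonneg (ha.le.trans hx'.1) n)]
    exact pow_le_pow_left₀ (ha.le.trans hx'.1) hx'.2 n
  -- Hölder for ρ : I2 ≤ Δ^{1/2} I4^{1/2}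
  have hρup : (∫ u in r..s, σ u ^ 2) ≤
      (s - r) ^ ((1 : ℝ) / 2) * (∫ u in r..s, σ u ^ 4) ^ ((1 : ℝ) / 2) := by
    have hpq : Real.HolderConjugate 2 2 := ⟨by norm_num, by norm_num, by norm_num⟩
    have H := integral_mul_le_Lp_mul_Lq_of_nonneg (μ := volume.restrict (Set.Ioc r s))
      hpq (f := fun _ => (1 : ℝ)) (g := fun u => σ u ^ 2)
      (ae_of_all _ fun _ => zero_le_one) (ae_of_all _ fun x => by positivity)
      (memLp_const 1) (by simpa using hboundℒp 2 (ENNReal.ofReal 2))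
    have e1 : ∫ u in Set.Ioc r s, (1:ℝ) * σ u ^ 2 = ∫ u in r..s, σ u ^ 2 := by
      rw [intervalIntegral.integral_of_le hrs.le]; simp
    have e2 : ∫ u in Set.Ioc r s, ((1:ℝ)) ^ (2:ℝ) = s - r := by
      simpa using hvol
    have e3 : ∫ u in Set.Ioc r s, (σ u ^ 2) ^ (2:ℝ) = ∫ u in r..s, σ u ^ 4 := by
      rw [intervalIntegral.integral_of_le hrs.le]
      refine setIntegral_congr_fun measurableSet_Ioc fun x _ => ?_
      rw [show (2:ℝ) = ((2:ℕ):ℝ) by norm_num, Real.rpow_natCast]; ring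
    rw [e1, e2, e3] at H
    simpa using H
  -- Hölder for κ : I3 ≤ Δ^{1/4} I4^{3/4}
  have hκup : (∫ u in r..s, σ u ^ 3) ≤
      (s - r) ^ ((1 : ℝ) / 4) * (∫ u in r..s, σ u ^ 4) ^ ((3 : ℝ) / 4) := by
    have hpq : Real.HolderConjugate 4 (4/3) := ⟨by norm_num, by norm_num, by norm_num⟩
    have H := integral_mul_le_Lp_mul_Lq_of_nonneg (μ := volume.restrict (Set.Ioc r s))
      hpq (f := fun _ => (1 : ℝ)) (g := fun u => σ u ^ 3)
      (ae_of_all _ fun _ => zero_le_one)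
      ((ae_restrict_iff' measurableSet_Ioc).2 (ae_of_all _ fun x hx =>
        pow_nonneg (ha.le.trans (hab x (Set.Ioc_subset_Icc_self hx)).1) 3))
      (memLp_const 1) (hboundℒp 3 (ENNReal.ofReal (4/3)))
    have e1 : ∫ u in Set.Ioc r s, (1:ℝ) * σ u ^ 3 = ∫ u in r..s, σ u ^ 3 := by
      rw [intervalIntegral.integral_of_le hrs.le]; simp
    have e2 : ∫ u in Set.Ioc r s, ((1:ℝ)) ^ (4:ℝ) = s - r := by
      simpa using hvol
    have e3 : ∫ u in Set.Ioc r s, (σ u ^ 3) ^ ((4:ℝ)/3) = ∫ u in r..s, σ u ^ 4 := by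
      rw [intervalIntegral.integral_of_le hrs.le]
      refine setIntegral_congr_fun measurableSet_Ioc fun x hx => ?_
      have hx0 : (0:ℝ) ≤ σ x := ha.le.trans (hab x (Set.Ioc_subset_Icc_self hx)).1
      rw [show σ x ^ 3 = σ x ^ ((3:ℕ):ℝ) by rw [Real.rpow_natCast],
        ← Real.rpow_mul hx0]
      norm_num
    rw [e1, e2, e3] at H
    have h34 : (1:ℝ) / (4/3) = 3/4 := by norm_num
    rw [h34] at H
    simpa using H
  -- rpow algebra
  have hΔhalf : (s - r) ^ ((1:ℝ)/2) * (s - r) ^ ((1:ℝ)/2) = s - r := by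
    rw [← Real.rpow_add hΔ]; norm_num
  have hΔquarter : (s - r) ^ ((1:ℝ)/4) * (s - r) ^ ((3:ℝ)/4) = s - r := by
    rw [← Real.rpow_add hΔ]; norm_num
  have hb4half : ((s - r) * b ^ 4) ^ ((1:ℝ)/2) = (s - r) ^ ((1:ℝ)/2) * b ^ 2 := by
    rw [Real.mul_rpow hΔ.le (by positivity)]
    congr 1
    rw [show (b:ℝ)^4 = (b^2)^(2:ℕ) by ring, ← Real.rpow_natCast (b^2) 2,
      ← Real.rpow_mul (by positivity)]
    norm_num
  have hb434 : ((s - r) * b ^ 4) ^ ((3:ℝ)/4) = (s - r) ^ ((3:ℝ)/4) * b ^ 3 := by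
    rw [Real.mul_rpow hΔ.le (by positivity)]
    congr 1
    rw [← Real.rpow_natCast b 4, ← Real.rpow_mul hb.le]
    norm_num
  constructor
  · constructor
    · -- lower bound for ρ
      have key : ((s - r) * a ^ 2) / ((s - r) ^ ((1:ℝ)/2) * ((s - r) * b ^ 4) ^ ((1:ℝ)/2)) ≤
          rhoM σ r s := by
        unfold rhoM
        exact div_le_div₀ hI2pos.le (hlb 2) hdenρ
          (mul_le_mul_of_nonneg_left
            (Real.rpow_le_rpow hI4pos.le (hub 4) (by norm_num))
            (Real.rpow_nonneg hΔ.le _))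
      refine le_trans (le_of_eq ?_) key
      rw [hb4half, show (s - r) ^ ((1:ℝ)/2) * ((s - r) ^ ((1:ℝ)/2) * b ^ 2) =
        ((s - r) ^ ((1:ℝ)/2) * (s - r) ^ ((1:ℝ)/2)) * b ^ 2 by ring, hΔhalf,
        mul_div_mul_left _ _ (ne_of_gt hΔ)]
    · unfold rhoM
      rw [div_le_one hdenρ]
      exact hρup
  · constructor
    · have key : ((s - r) * a ^ 3) / ((s - r) ^ ((1:ℝ)/4) * ((s - r) * b ^ 4) ^ ((3:ℝ)/4)) ≤
          kappaM σ r s := by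
        unfold kappaM
        exact div_le_div₀ hI3pos.le (hlb 3) hdenκ
          (mul_le_mul_of_nonneg_left
            (Real.rpow_le_rpow hI4pos.le (hub 4) (by norm_num))
            (Real.rpow_nonneg hΔ.le _))
      refine le_trans (le_of_eq ?_) key
      rw [hb434, show (s - r) ^ ((1:ℝ)/4) * ((s - r) ^ ((3:ℝ)/4) * b ^ 3) =
        ((s - r) ^ ((1:ℝ)/4) * (s - r) ^ ((3:ℝ)/4)) * b ^ 3 by ring, hΔquarter,
        mul_div_mul_left _ _ (ne_of_gt hΔ)]
    · unfold kappaM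
      rw [div_le_one hdenκ]
      exact hκup

set_option maxHeartbeats 1600000 in
/-- For a Lipschitz volatility path bounded away from zero, the blockwise
heteroskedasticity measures satisfy `1 − CΔ_B ≤ ρ_i ≤ 1` and
`1 − CΔ_B ≤ κ_i ≤ 1` for a constant `C > 0`. -/
theorem stmt11 (T σlo : ℝ) (hT : 0 < T) (hσlo : 0 < σlo) (σ : ℝ → ℝ)
    (K : NNReal) (hlip : LipschitzOnWith K σ (Set.Icc 0 T))
    (hbd : ∀ u ∈ Set.Icc (0 : ℝ) T, σlo ≤ σ u) :
    ∃ C > (0 : ℝ), ∀ B : ℕ, 1 ≤ B → ∀ i : ℕ, 1 ≤ i → i ≤ B →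
      (1 - C * (T / B) ≤ rhoM σ (((i : ℝ) - 1) * T / B) ((i : ℝ) * T / B) ∧
        rhoM σ (((i : ℝ) - 1) * T / B) ((i : ℝ) * T / B) ≤ 1) ∧
      (1 - C * (T / B) ≤ kappaM σ (((i : ℝ) - 1) * T / B) ((i : ℝ) * T / B) ∧
        kappaM σ (((i : ℝ) - 1) * T / B) ((i : ℝ) * T / B) ≤ 1) := by
  refine ⟨6 * ((K : ℝ) + 1) / σlo, by positivity, fun B hB i hi hiB => ?_⟩
  set C : ℝ := 6 * ((K : ℝ) + 1) / σlo with hC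
  have hBpos : (0 : ℝ) < B := by exact_mod_cast Nat.pos_of_ne_zero (by omega)
  have hipos : (1 : ℝ) ≤ (i : ℝ) := by exact_mod_cast hi
  have hiB' : (i : ℝ) ≤ (B : ℝ) := by exact_mod_cast hiB
  set Δ : ℝ := T / B with hΔdef
  have hΔpos : 0 < Δ := by positivity
  set r : ℝ := ((i : ℝ) - 1) * T / B with hrdef
  set s : ℝ := (i : ℝ) * T / B with hsdef
  have hsr : s - r = Δ := by rw [hsdef, hrdef, hΔdef]; field_simp; ring
  have hrs : r < s := by linarith
  have hr0 : 0 ≤ r := by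
    apply div_nonneg _ hBpos.le
    exact mul_nonneg (by linarith) hT.le
  have hsT : s ≤ T := by
    rw [hsdef, div_le_iff₀ hBpos]
    calc (i : ℝ) * T ≤ (B : ℝ) * T := by nlinarith
    _ = T * B := by ring
  have hsub : Set.Icc r s ⊆ Set.Icc 0 T := Set.Icc_subset_Icc hr0 hsT
  have hrmem : r ∈ Set.Icc (0:ℝ) T := ⟨hr0, le_trans hrs.le hsT⟩
  set a : ℝ := max σlo (σ r - (K : ℝ) * Δ) with hadef
  set b : ℝ := σ r + (K : ℝ) * Δ with hbdef
  have hKΔ : 0 ≤ (K : ℝ) * Δ := by positivity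
  have ha : 0 < a := lt_of_lt_of_le hσlo (le_max_left _ _)
  have hσloa : σlo ≤ a := le_max_left _ _
  have hbnds : ∀ u ∈ Set.Icc r s, a ≤ σ u ∧ σ u ≤ b := by
    intro u hu
    have huT : u ∈ Set.Icc (0:ℝ) T := hsub hu
    have hd := hlip.dist_le_mul u huT r hrmem
    rw [Real.dist_eq, Real.dist_eq] at hd
    have hur : |u - r| ≤ Δ := by
      rw [abs_of_nonneg (by linarith [hu.1])]
      linarith [hu.2]
    have hK : |σ u - σ r| ≤ (K : ℝ) * Δ := by
      calc |σ u - σ r| ≤ (K : ℝ) * |u - r| := hd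
      _ ≤ (K : ℝ) * Δ := by nlinarith [K.coe_nonneg]
    rw [abs_le] at hK
    constructor
    · exact max_le (hbd u huT) (by linarith [hK.1])
    · rw [hbdef]; linarith [hK.2]
  have hab : a ≤ b := by
    have := hbnds r ⟨le_refl r, hrs.le⟩
    linarith [this.1, this.2]
  have hb : 0 < b := lt_of_lt_of_le ha hab
  have hba : b - a ≤ 2 * ((K : ℝ) * Δ) := by
    have : σ r - (K : ℝ) * Δ ≤ a := le_max_right _ _
    rw [hbdef]; linarith
  obtain ⟨⟨hρl, hρu⟩, ⟨hκl, hκu⟩⟩ :=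
    block_bounds σ r s a b hrs (hlip.continuousOn.mono hsub) ha hbnds
  clear_value C Δ r s a b
  have hCΔ : C * Δ * σlo = 6 * ((K : ℝ) + 1) * Δ := by
    rw [hC]; field_simp
  have hρchain : 1 - C * Δ ≤ a ^ 2 / b ^ 2 := by
    have h1 : (σlo - 2 * (b - a)) / σlo ≤ a ^ 2 / b ^ 2 := by
      rw [div_le_div_iff₀ hσlo (by positivity : (0:ℝ) < b ^ 2)]
      have h1' : 0 ≤ (b - a) * (a - σlo) * (a + b) :=
        mul_nonneg (mul_nonneg (sub_nonneg.2 hab) (sub_nonneg.2 hσloa)) (by linarith)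
      have h2' : 0 ≤ (b - a) ^ 2 * (2 * b + a) :=
        mul_nonneg (sq_nonneg _) (by linarith)
      nlinarith [h1', h2']
    refine le_trans ?_ h1
    rw [le_div_iff₀ hσlo, show (1 - C * Δ) * σlo = σlo - C * Δ * σlo by ring, hCΔ]
    have hK1 : (K : ℝ) * Δ ≤ ((K : ℝ) + 1) * Δ := by nlinarith [hΔpos.le]
    have hK2 : 0 ≤ ((K : ℝ) + 1) * Δ := by positivity
    linarith [hba, hK1, hK2]
  have hκchain : 1 - C * Δ ≤ a ^ 3 / b ^ 3 := by
    have h1 : (σlo - 3 * (b - a)) / σlo ≤ a ^ 3 / b ^ 3 := by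
      rw [div_le_div_iff₀ hσlo (by positivity : (0:ℝ) < b ^ 3)]
      have h1' : 0 ≤ (b - a) * (a - σlo) * (b ^ 2 + a * b + a ^ 2) :=
        mul_nonneg (mul_nonneg (sub_nonneg.2 hab) (sub_nonneg.2 hσloa))
          (by nlinarith [mul_pos ha hb])
      have h2' : 0 ≤ (b - a) ^ 2 * (3 * b ^ 2 + 2 * a * b + a ^ 2) :=
        mul_nonneg (sq_nonneg _) (by nlinarith [mul_pos ha hb])
      nlinarith [h1', h2']
    refine le_trans ?_ h1
    rw [le_div_iff₀ hσlo, show (1 - C * Δ) * σlo = σlo - C * Δ * σlo by ring, hCΔ]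
    have hK1 : (K : ℝ) * Δ ≤ ((K : ℝ) + 1) * Δ := by nlinarith [hΔpos.le]
    have hK2 : 0 ≤ ((K : ℝ) + 1) * Δ := by positivity
    linarith [hba, hK1, hK2]
  exact ⟨⟨le_trans hρchain hρl, hρu⟩, ⟨le_trans hκchain hκl, hκu⟩⟩
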